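/- arXiv:2301.12834 — 5 statements merged into one kernel-verified Lean document; each statement's English description precedes it below -/
import Mathlib

section
/- Let d ≥ 1 and r ∈ (1,∞) with r' = r/(r−1), and let G : ℝ^{d×d} × ℝ^{d×d} → ℝ^{d×d} satisfy conditions (G1)–(G4) with exponent r. Then there exist constants C̃₁, C̃₂ > 0, independent of ε, such that for every ε ∈ (0,1) and every (S,D) ∈ ℝ^{d×d} × ℝ^{d×d} with Gε(S,D) = 0 one has S : D ≥ C̃₁(|S|^{min{2,r'}} + |D|^{min{2,r}}) − C̃₂. -/
noncomputable section
open MeasureTheory Filter Topology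

/-- `ℝ^{d×d}` with the Frobenius inner product, realized as a Euclidean space. -/
abbrev Mat (d : ℕ) : Type := EuclideanSpace ℝ (Fin d × Fin d)

/-- The Frobenius inner product `A : B`. -/
def frob {d : ℕ} (A B : Mat d) : ℝ := inner ℝ A B

/-- The partial derivative `∂_S G(S,D)` as a continuous linear map. -/
def partialS {d : ℕ} (G : Mat d × Mat d → Mat d) (p : Mat d × Mat d) :
    Mat d →L[ℝ] Mat d :=
  (fderiv ℝ G p).comp (ContinuousLinearMap.inl ℝ (Mat d) (Mat d))

/-- The partial derivative `∂_D G(S,D)` as a continuous linear map. -/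
def partialD {d : ℕ} (G : Mat d × Mat d → Mat d) (p : Mat d × Mat d) :
    Mat d →L[ℝ] Mat d :=
  (fderiv ℝ G p).comp (ContinuousLinearMap.inr ℝ (Mat d) (Mat d))

/-- (G1): `G` is Lipschitz continuous with `G(0,0) = 0`. -/
def CondG1 {d : ℕ} (G : Mat d × Mat d → Mat d) : Prop :=
  (∃ K : NNReal, LipschitzWith K G) ∧ G (0, 0) = 0

/-- (G2): a.e. differentiability together with the sign conditions on the partial
derivatives. -/
def CondG2 {d : ℕ} (G : Mat d × Mat d → Mat d) : Prop :=
  ∀ᵐ p ∂(volume : Measure (Mat d × Mat d)),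
    DifferentiableAt ℝ G p ∧
    (∀ X : Mat d, 0 ≤ frob (partialS G p X) X) ∧
    (∀ X : Mat d, frob (partialD G p X) X ≤ 0) ∧
    (∀ X : Mat d, X ≠ 0 → 0 < frob (partialS G p X - partialD G p X) X) ∧
    (∀ X : Mat d,
      frob (partialD G p (ContinuousLinearMap.adjoint (partialS G p) X)) X ≤ 0)

/-- (G3): either coercivity in `S` or anti-coercivity in `D` at infinity. -/
def CondG3 {d : ℕ} (G : Mat d × Mat d → Mat d) : Prop :=
  (∀ D : Mat d, 0 < liminf (fun S : Mat d => frob (G (S, D)) S) (comap norm atTop)) ∨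
  (∀ S : Mat d, limsup (fun D : Mat d => frob (G (S, D)) D) (comap norm atTop) < 0)

/-- (G4) with exponent `r`: `(r, r')`-coercivity on the null points of `G`. -/
def CondG4 {d : ℕ} (r : ℝ) (G : Mat d × Mat d → Mat d) : Prop :=
  ∃ C₁ C₂ : ℝ, 0 < C₁ ∧ 0 < C₂ ∧ ∀ S D : Mat d, G (S, D) = 0 →
    C₁ * (‖S‖ ^ (r / (r - 1)) + ‖D‖ ^ r) - C₂ ≤ frob S D

/-- The `ε`-approximation `Gε(S,D) := G(S − εD, D − εS)`. -/
def Geps {d : ℕ} (G : Mat d × Mat d → Mat d) (ε : ℝ) : Mat d × Mat d → Mat d :=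
  fun p => G (p.1 - ε • p.2, p.2 - ε • p.1)

/-! Inserting `G(S − εD, D − εS) = 0` into (G4) and expanding
`(S − εD) : (D − εS) = (1 + ε²) S : D − ε(|S|² + |D|²)` leaves, besides `(1 + ε²) S : D`, the terms
`C₁|S − εD|^{r'} + ε|D|²` and its mirror image. Since `|S| ≤ |S − εD| + ε|D|`, either `|S − εD|` or
`ε|D|` is at least `|S|/2`, and `ε|D|² ≥ (ε|D|)²` because `ε ≤ 1`: so the first term dominates a
multiple of `|S|^{r'}` or of `|S|²`, whichever is smaller up to a constant. Finally `1 + ε² ∈ [1, 2]`. -/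

lemma rpow_le_one_add_rpow {a p q : ℝ} (ha : 0 ≤ a) (hp : 0 ≤ p) (hpq : p ≤ q) :
    a ^ p ≤ 1 + a ^ q := by
  rcases le_total a 1 with h | h
  · linarith [Real.rpow_le_one ha h hp, Real.rpow_nonneg ha q]
  · linarith [Real.rpow_le_rpow_of_exponent_le h hpq]

lemma mul_rpow_min_two_sub_le {c x q : ℝ} (hc : 0 ≤ c) (hx : 0 ≤ x) (hq : 0 ≤ q) :
    c * x ^ min 2 q - c ≤ min (c * x ^ q) (c * x ^ 2) := by
  have hmin : 0 ≤ min 2 q := le_min zero_le_two hq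
  have hle_q := rpow_le_one_add_rpow hx hmin (min_le_right 2 q)
  have hle_two := rpow_le_one_add_rpow hx hmin (min_le_left 2 q)
  rw [Real.rpow_two] at hle_two
  exact le_min (by nlinarith) (by nlinarith)

lemma min_mul_half_rpow_le {C q ε x y w : ℝ} (hC : 0 ≤ C) (hq : 0 ≤ q) (hε0 : 0 ≤ ε)
    (hε1 : ε ≤ 1) (hx : 0 ≤ x) (hw : 0 ≤ w) (hxw : x ≤ w + ε * y) :
    min (C * (x / 2) ^ q) ((x / 2) ^ 2) ≤ C * w ^ q + ε * y ^ 2 := by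
  rcases le_total (x / 2) w with h | h
  · have : C * (x / 2) ^ q ≤ C * w ^ q := by gcongr
    have : 0 ≤ ε * y ^ 2 := by positivity
    exact (min_le_left _ _).trans (by linarith)
  · have hεy : x / 2 ≤ ε * y := by linarith
    have : (x / 2) ^ 2 ≤ ε * y ^ 2 :=
      calc (x / 2) ^ 2 ≤ (ε * y) ^ 2 := by gcongr
        _ = ε * (ε * y ^ 2) := by ring
        _ ≤ 1 * (ε * y ^ 2) := by gcongr
        _ = ε * y ^ 2 := one_mul _
    have : 0 ≤ C * w ^ q := by positivity
    exact (min_le_right _ _).trans (by linarith)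

lemma mul_norm_rpow_min_two_sub_le {E : Type*} [SeminormedAddCommGroup E] [NormedSpace ℝ E]
    {c C q ε : ℝ} (hc : 0 ≤ c) (hc4 : c ≤ 1 / 4) (hcC : c ≤ C / 2 ^ q) (hq : 0 ≤ q)
    (hε0 : 0 ≤ ε) (hε1 : ε ≤ 1) (S D : E) :
    c * ‖S‖ ^ min 2 q - c ≤ C * ‖S - ε • D‖ ^ q + ε * ‖D‖ ^ 2 := by
  have hC : 0 ≤ C := by simpa using (le_div_iff₀ (by positivity)).mp (hc.trans hcC)
  have hSD : ‖S‖ ≤ ‖S - ε • D‖ + ε * ‖D‖ := by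
    simpa [norm_smul, abs_of_nonneg hε0] using norm_le_norm_sub_add S (ε • D)
  calc c * ‖S‖ ^ min 2 q - c ≤ min (c * ‖S‖ ^ q) (c * ‖S‖ ^ 2) :=
        mul_rpow_min_two_sub_le hc (norm_nonneg S) hq
    _ ≤ min (C * (‖S‖ / 2) ^ q) ((‖S‖ / 2) ^ 2) := by
        rw [Real.div_rpow (norm_nonneg S) zero_le_two, ← mul_comm_div]
        gcongr
        rw [div_pow]
        nlinarith [sq_nonneg ‖S‖]
    _ ≤ C * ‖S - ε • D‖ ^ q + ε * ‖D‖ ^ 2 :=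
        min_mul_half_rpow_le hC hq hε0 hε1 (norm_nonneg S) (norm_nonneg _) hSD

lemma inner_sub_smul_sub_smul {E : Type*} [SeminormedAddCommGroup E] [InnerProductSpace ℝ E]
    (ε : ℝ) (S D : E) :
    inner ℝ (S - ε • D) (D - ε • S) = (1 + ε ^ 2) * inner ℝ S D - ε * (‖S‖ ^ 2 + ‖D‖ ^ 2) := by
  simp only [inner_sub_left, inner_sub_right, real_inner_smul_left, real_inner_smul_right,
    real_inner_self_eq_norm_sq, real_inner_comm D S]
  ring

lemma half_mul_sub_le_of_mul_sub_le_one_add_mul {c x K t F : ℝ} (hc : 0 ≤ c) (hx : 0 ≤ x)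
    (hK : 0 ≤ K) (ht0 : 0 ≤ t) (ht1 : t ≤ 1) (h : c * x - K ≤ (1 + t) * F) :
    c / 2 * x - K ≤ F := by
  have : 0 ≤ c * x := mul_nonneg hc hx
  rcases le_total 0 F with hF | hF <;> nlinarith

theorem Geps_uniform_coercivity_general {d : ℕ} (r : ℝ) (hr : 1 < r)
    (G : Mat d × Mat d → Mat d) (hG4 : CondG4 r G) :
    ∃ C₁ C₂ : ℝ, 0 < C₁ ∧ 0 < C₂ ∧
      ∀ ε ∈ Set.Ioo (0 : ℝ) 1, ∀ S D : Mat d, Geps G ε (S, D) = 0 →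
        C₁ * (‖S‖ ^ min 2 (r / (r - 1)) + ‖D‖ ^ min 2 r) - C₂ ≤ frob S D := by
  obtain ⟨C₁, C₂, hC₁, hC₂, hG4⟩ := hG4
  set r' := r / (r - 1)
  have hr' : 0 ≤ r' := div_nonneg (by linarith) (by linarith)
  set c := min (1 / 4) (min (C₁ / 2 ^ r') (C₁ / 2 ^ r))
  have hc : 0 < c := by positivity
  refine ⟨c / 2, 2 * c + C₂, by positivity, by positivity, ?_⟩
  rintro ε ⟨hε0, hε1⟩ S D hSD
  have hS := mul_norm_rpow_min_two_sub_le hc.le (min_le_left _ _)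
    ((min_le_right _ _).trans (min_le_left _ _)) hr' hε0.le hε1.le S D
  have hD := mul_norm_rpow_min_two_sub_le hc.le (min_le_left _ _)
    ((min_le_right _ _).trans (min_le_right _ _)) (by linarith) hε0.le hε1.le D S
  have hG := hG4 _ _ hSD
  unfold frob at hG ⊢
  rw [inner_sub_smul_sub_smul] at hG
  refine half_mul_sub_le_of_mul_sub_le_one_add_mul hc.le (by positivity) (by positivity)
    (sq_nonneg ε) (pow_le_one₀ hε0.le hε1.le) ?_
  linarith

/-- uniform (`ε`-independent) coercivity of the null points of the
`ε`-approximations `Gε`. -/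
theorem Geps_uniform_coercivity {d : ℕ} (hd : 1 ≤ d) (r : ℝ) (hr : 1 < r)
    (G : Mat d × Mat d → Mat d)
    (hG1 : CondG1 G) (hG2 : CondG2 G) (hG3 : CondG3 G) (hG4 : CondG4 r G) :
    ∃ C₁ C₂ : ℝ, 0 < C₁ ∧ 0 < C₂ ∧
      ∀ ε ∈ Set.Ioo (0 : ℝ) 1, ∀ S D : Mat d, Geps G ε (S, D) = 0 →
        C₁ * (‖S‖ ^ min 2 (r / (r - 1)) + ‖D‖ ^ min 2 r) - C₂ ≤ frob S D :=
  Geps_uniform_coercivity_general r hr G hG4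
end
end

section
/- Let d ≥ 1 and r ∈ (1,∞), and let G : ℝ^{d×d} × ℝ^{d×d} → ℝ^{d×d} satisfy conditions (G1)–(G4) with exponent r. Then for every ε ∈ (0,1) the ε-approximation Gε satisfies (G4) with exponent 2, i.e. there exist constants c₁(ε), c₂(ε) > 0 such that for every (S,D) ∈ ℝ^{d×d} × ℝ^{d×d} with Gε(S,D) = 0 one has S : D ≥ c₁(ε)(|S|² + |D|²) − c₂(ε). -/
noncomputable section
open MeasureTheory Filter Topology

/-!
At a null point `(S, D)` of `Gε`, the pair `(S - εD, D - εS)` is a null point of `G`, so (G4)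
bounds `(S - εD) : (D - εS)` below by `-C₂`. Expanding,
`(S - εD) : (D - εS) = (1 + ε²) S : D - ε (|S|² + |D|²)`, and the positive weight `ε` of the
quadratic term is what yields coercivity with exponent `2`.
-/

variable {d : ℕ}

lemma frob_sub_smul_sub_smul (S D : Mat d) (ε : ℝ) :
    frob (S - ε • D) (D - ε • S) = (1 + ε ^ 2) * frob S D - ε * (‖S‖ ^ 2 + ‖D‖ ^ 2) := by
  simp only [frob, inner_sub_left, inner_sub_right, real_inner_smul_left,
    real_inner_smul_right, real_inner_self_eq_norm_sq, real_inner_comm D S]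
  ring

lemma CondG4.exists_neg_le_frob {r : ℝ} {G : Mat d × Mat d → Mat d} (hG : CondG4 r G) :
    ∃ C : ℝ, 0 < C ∧ ∀ S D : Mat d, G (S, D) = 0 → -C ≤ frob S D := by
  obtain ⟨C₁, C₂, hC₁, hC₂, hG⟩ := hG
  refine ⟨C₂, hC₂, fun S D hSD => ?_⟩
  have : 0 ≤ C₁ * (‖S‖ ^ (r / (r - 1)) + ‖D‖ ^ r) := by positivity
  linarith [hG S D hSD]

lemma Geps_quadratic_lower_bound {G : Mat d × Mat d → Mat d} {C ε : ℝ} (hε : 0 < ε)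
    (hG : ∀ S D : Mat d, G (S, D) = 0 → -C ≤ frob S D) (S D : Mat d)
    (hSD : Geps G ε (S, D) = 0) :
    ε / (1 + ε ^ 2) * (‖S‖ ^ 2 + ‖D‖ ^ 2) - C / (1 + ε ^ 2) ≤ frob S D := by
  have hshift := hG _ _ hSD
  rw [frob_sub_smul_sub_smul] at hshift
  rw [div_mul_eq_mul_div, ← sub_div, div_le_iff₀ (by positivity)]
  linarith

theorem Geps_condG4_two_general {d : ℕ} (r : ℝ)
    (G : Mat d × Mat d → Mat d)
    (hG4 : CondG4 r G)
    (ε : ℝ) (hε : ε ∈ Set.Ioo (0 : ℝ) 1) :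
    ∃ c₁ c₂ : ℝ, 0 < c₁ ∧ 0 < c₂ ∧
      ∀ S D : Mat d, Geps G ε (S, D) = 0 →
        c₁ * (‖S‖ ^ 2 + ‖D‖ ^ 2) - c₂ ≤ frob S D := by
  obtain ⟨C, hC, hG⟩ := hG4.exists_neg_le_frob
  have hε0 : 0 < ε := hε.1
  exact ⟨ε / (1 + ε ^ 2), C / (1 + ε ^ 2), by positivity, by positivity,
    Geps_quadratic_lower_bound hε0 hG⟩

/-- each `ε`-approximation `Gε` satisfies the coercivity condition (G4)
with exponent `2`. -/
theorem Geps_condG4_two {d : ℕ} (hd : 1 ≤ d) (r : ℝ) (hr : 1 < r)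
    (G : Mat d × Mat d → Mat d)
    (hG1 : CondG1 G) (hG2 : CondG2 G) (hG3 : CondG3 G) (hG4 : CondG4 r G)
    (ε : ℝ) (hε : ε ∈ Set.Ioo (0 : ℝ) 1) :
    ∃ c₁ c₂ : ℝ, 0 < c₁ ∧ 0 < c₂ ∧
      ∀ S D : Mat d, Geps G ε (S, D) = 0 →
        c₁ * (‖S‖ ^ 2 + ‖D‖ ^ 2) - c₂ ≤ frob S D :=
  Geps_condG4_two_general r G hG4 ε hε
end
end

section
/- Let d ≥ 1 and let G : ℝ^{d×d} × ℝ^{d×d} → ℝ^{d×d} satisfy conditions (G1) and (G2). Then for every ε ∈ (0,1) the ε-approximation Gε(S,D) := G(S − εD, D − εS) also satisfies condition (G2): at almost every (S,D) ∈ ℝ^{d×d} × ℝ^{d×d}, Gε is differentiable and its partial derivatives satisfy (∂_S Gε(S,D)[X]):X ≥ 0 and (∂_D Gε(S,D)[X]):X ≤ 0 for every X, ((∂_S Gε(S,D) − ∂_D Gε(S,D))[X]):X > 0 for every X ≠ 0, and (∂_D Gε(S,D)[(∂_S Gε(S,D))*[X]]):X ≤ 0 for every X. -/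
noncomputable section
open MeasureTheory Filter Topology

/-! `Gε = G ∘ L` with `L (S, D) = (S - εD, D - εS)`, a linear map of nonzero determinant when
`ε² ≠ 1`; hence `L` pulls null sets back to null sets and the a.e. properties of `G` hold at
`L p` for a.e. `p`. By the chain rule `∂_S Gε = A - εB` and `∂_D Gε = B - εA`, where `A`, `B` are
the partial derivatives of `G` at `L p`, and the sign conditions survive this mixing for `ε ≥ 0`:
with `u = A* X`, `v = B* X` the last one becomes `(1 + ε²)⟪u, v⟫ - ε(‖u‖² + ‖v‖²) ≤ 0`. -/

open ContinuousLinearMap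
open scoped InnerProductSpace

section SignConditions

variable {E : Type*} [NormedAddCommGroup E] [InnerProductSpace ℝ E] [CompleteSpace E]

/-- The pointwise sign conditions of (G2) on a pair `(A, B) = (∂_S G, ∂_D G)`. -/
def G2Signs (A B : E →L[ℝ] E) : Prop :=
  (∀ X, 0 ≤ ⟪A X, X⟫_ℝ) ∧ (∀ X, ⟪B X, X⟫_ℝ ≤ 0) ∧
    (∀ X, X ≠ 0 → 0 < ⟪A X - B X, X⟫_ℝ) ∧ ∀ X, ⟪B (adjoint A X), X⟫_ℝ ≤ 0

theorem G2Signs.sub_smul_swap {A B : E →L[ℝ] E} (h : G2Signs A B) {ε : ℝ} (hε : 0 ≤ ε) :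
    G2Signs (A - ε • B) (B - ε • A) := by
  obtain ⟨hA, hB, hAB, hBA⟩ := h
  refine ⟨fun X ↦ ?_, fun X ↦ ?_, fun X hX ↦ ?_, fun X ↦ ?_⟩
  · have := mul_nonpos_of_nonneg_of_nonpos hε (hB X)
    simp only [sub_apply, smul_apply, inner_sub_left, real_inner_smul_left]
    linarith [hA X]
  · have := mul_nonneg hε (hA X)
    simp only [sub_apply, smul_apply, inner_sub_left, real_inner_smul_left]
    linarith [hB X]
  · have : ⟪(A - ε • B) X - (B - ε • A) X, X⟫_ℝ = (1 + ε) * ⟪A X - B X, X⟫_ℝ := by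
      simp only [sub_apply, smul_apply, inner_sub_left, real_inner_smul_left]
      ring
    rw [this]
    exact mul_pos (by linarith) (hAB X hX)
  · have huv : ⟪adjoint A X, adjoint B X⟫_ℝ ≤ 0 := by rw [adjoint_inner_right]; exact hBA X
    rw [← adjoint_inner_right, map_sub, map_smul, map_sub, map_smul]
    simp only [sub_apply, smul_apply]
    generalize adjoint A X = u, adjoint B X = v at huv ⊢
    have expand : ⟪u - ε • v, v - ε • u⟫_ℝ
        = (1 + ε ^ 2) * ⟪u, v⟫_ℝ - ε * (‖u‖ ^ 2 + ‖v‖ ^ 2) := by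
      simp only [inner_sub_left, inner_sub_right, real_inner_smul_left, real_inner_smul_right,
        real_inner_self_eq_norm_sq, real_inner_comm u v]
      ring
    have hmix := mul_nonpos_of_nonneg_of_nonpos (by positivity : 0 ≤ 1 + ε ^ 2) huv
    have hnorms := mul_nonneg hε (by positivity : 0 ≤ ‖u‖ ^ 2 + ‖v‖ ^ 2)
    linarith

end SignConditions

section CrossShear

variable {E : Type*} [NormedAddCommGroup E] [NormedSpace ℝ E]

def crossShear (ε : ℝ) : E × E →L[ℝ] E × E :=
  (fst ℝ E E - ε • snd ℝ E E).prod (snd ℝ E E - ε • fst ℝ E E)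

@[simp]
theorem crossShear_apply (ε : ℝ) (p : E × E) :
    crossShear ε p = (p.1 - ε • p.2, p.2 - ε • p.1) := rfl

theorem det_crossShear_ne_zero [FiniteDimensional ℝ E] {ε : ℝ} (hε : ε ^ 2 ≠ 1) :
    (crossShear ε : E × E →L[ℝ] E × E).det ≠ 0 := by
  rw [Ne, LinearMap.det_eq_zero_iff_ker_ne_bot, not_not, LinearMap.ker_eq_bot']
  rintro ⟨S, D⟩ h
  simp only [coe_coe, crossShear_apply, Prod.mk_eq_zero, sub_eq_zero] at h
  obtain ⟨hS, hD⟩ := h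
  have hne : 1 - ε ^ 2 ≠ 0 := sub_ne_zero.mpr (Ne.symm hε)
  have hS0 : (1 - ε ^ 2) • S = 0 := by
    rw [sub_smul, one_smul, sq, ← smul_smul, ← hD, ← hS, sub_self]
  have hS' : S = 0 := (smul_eq_zero.mp hS0).resolve_left hne
  simp [hS', hD]

end CrossShear

theorem condG2_iff {d : ℕ} (G : Mat d × Mat d → Mat d) :
    CondG2 G ↔ ∀ᵐ p ∂(volume : Measure (Mat d × Mat d)),
      DifferentiableAt ℝ G p ∧ G2Signs (partialS G p) (partialD G p) :=
  Iff.rfl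

section Geps

variable {d : ℕ} {G : Mat d × Mat d → Mat d} {ε : ℝ} {p : Mat d × Mat d}

theorem hasFDerivAt_Geps {G' : Mat d × Mat d →L[ℝ] Mat d}
    (hG : HasFDerivAt G G' (crossShear ε p)) :
    HasFDerivAt (Geps G ε) (G'.comp (crossShear ε)) p :=
  hG.comp p (ContinuousLinearMap.hasFDerivAt _)

theorem partialS_Geps (hG : DifferentiableAt ℝ G (crossShear ε p)) :
    partialS (Geps G ε) p = partialS G (crossShear ε p) - ε • partialD G (crossShear ε p) := by
  ext1 X
  simp only [partialS, partialD, (hasFDerivAt_Geps hG.hasFDerivAt).fderiv, comp_apply,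
    inl_apply, inr_apply, crossShear_apply, sub_apply, smul_apply, ← map_smul, ← map_sub]
  simp

theorem partialD_Geps (hG : DifferentiableAt ℝ G (crossShear ε p)) :
    partialD (Geps G ε) p = partialD G (crossShear ε p) - ε • partialS G (crossShear ε p) := by
  ext1 X
  simp only [partialS, partialD, (hasFDerivAt_Geps hG.hasFDerivAt).fderiv, comp_apply,
    inl_apply, inr_apply, crossShear_apply, sub_apply, smul_apply, ← map_smul, ← map_sub]
  simp

end Geps

instance {d : ℕ} : (volume : Measure (Mat d × Mat d)).IsAddHaarMeasure :=
  Measure.prod.instIsAddHaarMeasure _ _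

theorem Geps_condG2_general {d : ℕ}
    (G : Mat d × Mat d → Mat d)
    (hG2 : CondG2 G)
    (ε : ℝ) (hε : ε ∈ Set.Ioo (0 : ℝ) 1) :
    CondG2 (Geps G ε) := by
  obtain ⟨hε0, hε1⟩ := hε
  have hdet : (crossShear ε : Mat d × Mat d →L[ℝ] Mat d × Mat d).det ≠ 0 :=
    det_crossShear_ne_zero (by nlinarith)
  rw [condG2_iff] at hG2 ⊢
  filter_upwards [(Measure.ContinuousLinearMap.quasiMeasurePreserving volume _ hdet).ae hG2]
    with p ⟨hdiff, hsigns⟩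
  refine ⟨(hasFDerivAt_Geps hdiff.hasFDerivAt).differentiableAt, ?_⟩
  rw [partialS_Geps hdiff, partialD_Geps hdiff]
  exact hsigns.sub_smul_swap hε0.le

/-- if `G` satisfies (G1) and (G2), then every `ε`-approximation `Gε`
also satisfies (G2). -/
theorem Geps_condG2 {d : ℕ} (hd : 1 ≤ d)
    (G : Mat d × Mat d → Mat d)
    (hG1 : CondG1 G) (hG2 : CondG2 G)
    (ε : ℝ) (hε : ε ∈ Set.Ioo (0 : ℝ) 1) :
    CondG2 (Geps G ε) :=
  Geps_condG2_general G hG2 ε hε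
end
end

section
/- Let d ≥ 1 and ν > 0, τ* > 0, and define the Bingham response map f_B : ℝ^{d×d} → ℝ^{d×d} by f_B(S) := (1/(2ν))((|S| − τ*)⁺/|S|) S for S ≠ 0 and f_B(0) := 0 (so f_B(S) = 0 whenever |S| ≤ τ*). Then: (i) f_B is Lipschitz continuous; (ii) f_B is monotone, i.e. (f_B(S₁) − f_B(S₂)) : (S₁ − S₂) ≥ 0 for all S₁, S₂ ∈ ℝ^{d×d}; (iii) there exist constants C₁, C₂ > 0 such that for every S ∈ ℝ^{d×d}, S : f_B(S) ≥ C₁(|S|² + |f_B(S)|²) − C₂, i.e. the Bingham model satisfies the coercivity condition (G4) with exponent r = 2. -/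
/-!
Writing `P` for the radial projection onto the closed ball of radius `τ*`, the Bingham map is
`f_B = (1/(2ν)) (id - P)`. Metric projections onto closed convex sets are firmly nonexpansive,
`‖P x - P y‖² ≤ ⟪x - y, P x - P y⟫`, and so is `id - P`. Firm nonexpansiveness gives both
monotonicity and the Lipschitz bound. Coercivity follows from `⟪S, S - P S⟫ ≥ ‖S - P S‖²` (firm
nonexpansiveness against `0`) together with `⟪S, S - P S⟫ ≥ ‖S‖² - τ* ‖S‖`, since `‖P S‖ ≤ τ*`.
-/

noncomputable section
open scoped Classical

/-- The Bingham response map `D = f_B(S) = (1/(2ν)) ((|S|−τ*)⁺/|S|) S`, with `f_B(0)=0`. -/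
def binghamMap {d : ℕ} (ν τstar : ℝ) (S : Mat d) : Mat d :=
  if S = 0 then 0 else ((1 / (2 * ν)) * (max (‖S‖ - τstar) 0 / ‖S‖)) • S

open scoped RealInnerProductSpace

section InnerProductSpace

variable {E : Type*} [NormedAddCommGroup E] [InnerProductSpace ℝ E]

def FirmlyNonexpansive (T : E → E) : Prop :=
  ∀ x y, ‖T x - T y‖ ^ 2 ≤ ⟪x - y, T x - T y⟫

namespace FirmlyNonexpansive

variable {T : E → E}

theorem inner_nonneg (hT : FirmlyNonexpansive T) (x y : E) : 0 ≤ ⟪T x - T y, x - y⟫ := by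
  rw [real_inner_comm]
  exact (sq_nonneg _).trans (hT x y)

theorem norm_sub_le (hT : FirmlyNonexpansive T) (x y : E) : ‖T x - T y‖ ≤ ‖x - y‖ := by
  have hcs : ⟪x - y, T x - T y⟫ ≤ ‖x - y‖ * ‖T x - T y‖ := real_inner_le_norm _ _
  nlinarith [hT x y, norm_nonneg (T x - T y), norm_nonneg (x - y)]

theorem lipschitzWith_one (hT : FirmlyNonexpansive T) : LipschitzWith 1 T :=
  LipschitzWith.of_dist_le_mul fun x y => by
    simpa only [dist_eq_norm, NNReal.coe_one, one_mul] using hT.norm_sub_le x y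

theorem id_sub (hT : FirmlyNonexpansive T) : FirmlyNonexpansive fun x => x - T x := by
  intro x y
  have hsplit : x - T x - (y - T y) = (x - y) - (T x - T y) := by abel
  rw [hsplit, norm_sub_sq_real, inner_sub_right (x - y) (x - y), real_inner_self_eq_norm_sq]
  linarith [hT x y, real_inner_comm (x - y) (T x - T y)]

end FirmlyNonexpansive

def ballProj (τ : ℝ) (x : E) : E :=
  if ‖x‖ ≤ τ then x else (τ / ‖x‖) • x

variable {τ : ℝ}

theorem norm_ballProj_le (hτ : 0 ≤ τ) (x : E) : ‖ballProj τ x‖ ≤ τ := by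
  unfold ballProj
  split_ifs with h
  · exact h
  · have hx : 0 < ‖x‖ := hτ.trans_lt (not_le.mp h)
    rw [norm_smul, Real.norm_eq_abs, abs_of_nonneg (div_nonneg hτ hx.le),
      div_mul_cancel₀ τ hx.ne']

theorem inner_sub_ballProj_nonpos (hτ : 0 ≤ τ) (x z : E) (hz : ‖z‖ ≤ τ) :
    ⟪x - ballProj τ x, z - ballProj τ x⟫ ≤ 0 := by
  unfold ballProj
  split_ifs with h
  · simp
  · have hx : 0 < ‖x‖ := hτ.trans_lt (not_le.mp h)
    have hxz : ⟪x, z⟫ ≤ ‖x‖ * τ :=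
      (real_inner_le_norm x z).trans (mul_le_mul_of_nonneg_left hz hx.le)
    have hfactor : ⟪x - (τ / ‖x‖) • x, z - (τ / ‖x‖) • x⟫ =
        (1 - τ / ‖x‖) * (⟪x, z⟫ - τ * ‖x‖) := by
      have hc : τ / ‖x‖ * ‖x‖ ^ 2 = τ * ‖x‖ := by field_simp
      simp only [inner_sub_left, inner_sub_right, real_inner_smul_left, real_inner_smul_right]
      rw [real_inner_self_eq_norm_sq, real_inner_comm z x]
      linear_combination (τ / ‖x‖ - 1) * hc
    rw [hfactor]
    apply mul_nonpos_of_nonneg_of_nonpos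
    · linarith [(div_le_one hx).mpr (not_le.mp h).le]
    · linarith

theorem firmlyNonexpansive_ballProj (hτ : 0 ≤ τ) :
    FirmlyNonexpansive (ballProj (E := E) τ) := by
  intro x y
  have hx := inner_sub_ballProj_nonpos hτ x (ballProj τ y) (norm_ballProj_le hτ y)
  have hy := inner_sub_ballProj_nonpos hτ y (ballProj τ x) (norm_ballProj_le hτ x)
  have hsplit : ⟪x - y, ballProj τ x - ballProj τ y⟫ =
      ‖ballProj τ x - ballProj τ y‖ ^ 2 - ⟪x - ballProj τ x, ballProj τ y - ballProj τ x⟫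
        - ⟪y - ballProj τ y, ballProj τ x - ballProj τ y⟫ := by
    rw [← real_inner_self_eq_norm_sq]
    simp only [inner_sub_left, inner_sub_right]
    ring
  linarith

theorem half_sq_sub_le_inner_sub_ballProj (hτ : 0 ≤ τ) (x : E) :
    (‖x‖ ^ 2 - τ ^ 2) / 2 ≤ ⟪x, x - ballProj τ x⟫ := by
  have hP : ⟪x, ballProj τ x⟫ ≤ ‖x‖ * τ := (real_inner_le_norm _ _).trans
    (mul_le_mul_of_nonneg_left (norm_ballProj_le hτ x) (norm_nonneg x))
  rw [inner_sub_right, real_inner_self_eq_norm_sq]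
  nlinarith [sq_nonneg (‖x‖ - τ)]

end InnerProductSpace

section Bingham

variable {d : ℕ}

theorem binghamMap_eq (ν τ : ℝ) (S : Mat d) :
    binghamMap ν τ S = (1 / (2 * ν)) • (S - ballProj τ S) := by
  by_cases h : S = 0
  · simp [h, binghamMap, ballProj]
  have hS : ‖S‖ ≠ 0 := norm_ne_zero_iff.mpr h
  rw [binghamMap, if_neg h, ballProj]
  split_ifs with hle
  · simp [max_eq_right (sub_nonpos.mpr hle)]
  · rw [max_eq_left (sub_nonneg.mpr (not_le.mp hle).le), mul_smul, sub_div, div_self hS,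
      sub_smul, one_smul]

theorem binghamMap_coercive {ν τ : ℝ} (hν : 0 < ν) (hτ : 0 ≤ τ) (S : Mat d) :
    1 / (2 * ν) / (4 * (1 + (1 / (2 * ν)) ^ 2)) * (‖S‖ ^ 2 + ‖binghamMap ν τ S‖ ^ 2)
      - 1 / (2 * ν) * τ ^ 2 / 4 ≤ frob S (binghamMap ν τ S) := by
  set a : ℝ := 1 / (2 * ν)
  have ha : 0 < a := by positivity
  have hR := (firmlyNonexpansive_ballProj (E := Mat d) hτ).id_sub S 0
  simp only [show ballProj τ (0 : Mat d) = 0 by simp [ballProj, hτ], sub_zero] at hR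
  set R : Mat d := S - ballProj τ S
  have hnorm : ‖binghamMap ν τ S‖ = a * ‖R‖ := by
    rw [binghamMap_eq, norm_smul, Real.norm_eq_abs, abs_of_pos ha]
  have hfrob : frob S (binghamMap ν τ S) = a * ⟪S, R⟫ := by
    rw [frob, binghamMap_eq, real_inner_smul_right]
  have hS := half_sq_sub_le_inner_sub_ballProj hτ S
  have hcoef₁ : a / (4 * (1 + a ^ 2)) ≤ a / 4 :=
    div_le_div_of_nonneg_left ha.le (by norm_num) (by nlinarith)
  have hcoef₂ : a / (4 * (1 + a ^ 2)) * a ^ 2 ≤ a / 4 := by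
    rw [div_mul_eq_mul_div, div_le_div_iff₀ (by positivity) (by norm_num)]
    nlinarith [pow_pos ha 3]
  rw [hnorm, hfrob]
  nlinarith [mul_le_mul_of_nonneg_right hcoef₁ (sq_nonneg ‖S‖),
    mul_le_mul_of_nonneg_right hcoef₂ (sq_nonneg ‖R‖)]

end Bingham

theorem bingham_properties_general {d : ℕ} (ν τstar : ℝ)
    (hν : 0 < ν) (hτ : 0 < τstar) :
    (∃ K : NNReal, LipschitzWith K (binghamMap (d := d) ν τstar)) ∧
    (∀ S₁ S₂ : Mat d,
      0 ≤ frob (binghamMap ν τstar S₁ - binghamMap ν τstar S₂) (S₁ - S₂)) ∧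
    (∃ C₁ C₂ : ℝ, 0 < C₁ ∧ 0 < C₂ ∧ ∀ S : Mat d,
      C₁ * (‖S‖ ^ 2 + ‖binghamMap ν τstar S‖ ^ 2) - C₂ ≤
        frob S (binghamMap ν τstar S)) := by
  have hB : binghamMap (d := d) ν τstar = fun S => (1 / (2 * ν)) • (S - ballProj τstar S) :=
    funext (binghamMap_eq ν τstar)
  have hR := (firmlyNonexpansive_ballProj (E := Mat d) hτ.le).id_sub
  refine ⟨?_, fun S₁ S₂ => ?_, ⟨_, _, by positivity, by positivity, binghamMap_coercive hν hτ.le⟩⟩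
  · rw [hB]
    exact ⟨_, (lipschitzWith_smul _).comp hR.lipschitzWith_one⟩
  · rw [frob, hB, ← smul_sub, real_inner_smul_left]
    exact mul_nonneg (by positivity) (hR.inner_nonneg S₁ S₂)

/-- the Bingham response map is Lipschitz continuous, monotone, and
satisfies the coercivity condition (G4) with exponent `r = 2`. -/
theorem bingham_properties {d : ℕ} (hd : 1 ≤ d) (ν τstar : ℝ)
    (hν : 0 < ν) (hτ : 0 < τstar) :
    (∃ K : NNReal, LipschitzWith K (binghamMap (d := d) ν τstar)) ∧
    (∀ S₁ S₂ : Mat d,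
      0 ≤ frob (binghamMap ν τstar S₁ - binghamMap ν τstar S₂) (S₁ - S₂)) ∧
    (∃ C₁ C₂ : ℝ, 0 < C₁ ∧ 0 < C₂ ∧ ∀ S : Mat d,
      C₁ * (‖S‖ ^ 2 + ‖binghamMap ν τstar S‖ ^ 2) - C₂ ≤
        frob S (binghamMap ν τstar S)) :=
  bingham_properties_general ν τstar hν hτ
end
end

section
/- Let d ≥ 1 and ν > 0, δ* > 0, and define the activated Euler response map f_E : ℝ^{d×d} → ℝ^{d×d} by f_E(D) := 2ν((|D| − δ*)⁺/|D|) D for D ≠ 0 and f_E(0) := 0 (so f_E(D) = 0 whenever |D| ≤ δ*). Then: (i) f_E is Lipschitz continuous; (ii) f_E is monotone, i.e. (f_E(D₁) − f_E(D₂)) : (D₁ − D₂) ≥ 0 for all D₁, D₂ ∈ ℝ^{d×d}; (iii) there exist constants C₁, C₂ > 0 such that for every D ∈ ℝ^{d×d}, f_E(D) : D ≥ C₁(|f_E(D)|² + |D|²) − C₂, i.e. the activated Euler model satisfies the coercivity condition (G4) with exponent r = 2. -/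
noncomputable section
open scoped Classical

/-- The activated Euler response map `S = f_E(D) = 2ν ((|D|−δ*)⁺/|D|) D`, with
`f_E(0)=0`. -/
def activatedEulerMap {d : ℕ} (ν δstar : ℝ) (D : Mat d) : Mat d :=
  if D = 0 then 0 else (2 * ν * (max (‖D‖ - δstar) 0 / ‖D‖)) • D

/-!
The map `f_E` is `2ν S_{δ*}`, where `S_δ x = (‖x‖ - δ)⁺ x / ‖x‖` is block soft
thresholding (`softThreshold`). Since `S_δ x` is `x` minus its projection onto the ball of radius
`δ`, it is firmly nonexpansive: `‖S_δ x - S_δ y‖² ≤ ⟪S_δ x - S_δ y, x - y⟫`. This gives Lipschitz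
continuity and monotonicity at once. Coercivity comes from `⟪S_δ x, x⟫ = (‖x‖ - δ)⁺ ‖x‖`, which
is at least `(‖S_δ x‖² + ‖x‖² - δ²) / 2`.
-/

open scoped RealInnerProductSpace

theorem max_sub_zero_div_mul_self {δ : ℝ} (hδ : 0 ≤ δ) (t : ℝ) :
    max (t - δ) 0 / t * t = max (t - δ) 0 := by
  rcases eq_or_ne t 0 with rfl | ht
  · simp [hδ]
  · exact div_mul_cancel₀ _ ht

theorem max_sub_zero_div_le_one {δ : ℝ} (hδ : 0 ≤ δ) {t : ℝ} (ht : 0 ≤ t) :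
    max (t - δ) 0 / t ≤ 1 :=
  div_le_one_of_le₀ (max_le (by linarith) ht) ht

theorem monotone_max_sub_zero (δ : ℝ) : Monotone fun t : ℝ => max (t - δ) 0 :=
  fun _ _ h => max_le_max (by linarith) le_rfl

theorem monotone_sub_max_sub_zero (δ : ℝ) : Monotone fun t : ℝ => t - max (t - δ) 0 := by
  intro s t h
  simp only [← min_sub_sub_left, sub_sub_cancel, sub_zero]
  exact min_le_min_left δ h

section SoftThreshold

variable {E : Type*} [NormedAddCommGroup E] [InnerProductSpace ℝ E]

theorem inner_smul_sub_smul_nonneg {a₁ a₂ b₁ b₂ : ℝ} (ha₁ : 0 ≤ a₁) (ha₂ : 0 ≤ a₂)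
    (hb₁ : 0 ≤ b₁) (hb₂ : 0 ≤ b₂) {x y : E}
    (h : 0 ≤ (a₁ * ‖x‖ - a₂ * ‖y‖) * (b₁ * ‖x‖ - b₂ * ‖y‖)) :
    0 ≤ ⟪a₁ • x - a₂ • y, b₁ • x - b₂ • y⟫ := by
  have hxy : ⟪x, y⟫ ≤ ‖x‖ * ‖y‖ := real_inner_le_norm x y
  have hexp : ⟪a₁ • x - a₂ • y, b₁ • x - b₂ • y⟫ =
      a₁ * b₁ * ‖x‖ ^ 2 + a₂ * b₂ * ‖y‖ ^ 2 - (a₁ * b₂ + a₂ * b₁) * ⟪x, y⟫ := by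
    simp only [inner_sub_left, inner_sub_right, real_inner_smul_left, real_inner_smul_right,
      real_inner_self_eq_norm_sq, real_inner_comm x y]
    ring
  rw [hexp]
  nlinarith [mul_le_mul_of_nonneg_left hxy (by positivity : 0 ≤ a₁ * b₂ + a₂ * b₁)]

def softThreshold (δ : ℝ) (x : E) : E := (max (‖x‖ - δ) 0 / ‖x‖) • x

theorem norm_softThreshold {δ : ℝ} (hδ : 0 ≤ δ) (x : E) :
    ‖softThreshold δ x‖ = max (‖x‖ - δ) 0 := by
  rw [softThreshold, norm_smul, Real.norm_of_nonneg (by positivity),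
    max_sub_zero_div_mul_self hδ]

theorem inner_softThreshold_self {δ : ℝ} (hδ : 0 ≤ δ) (x : E) :
    ⟪softThreshold δ x, x⟫ = max (‖x‖ - δ) 0 * ‖x‖ := by
  rw [softThreshold, real_inner_smul_left, real_inner_self_eq_norm_sq, sq, ← mul_assoc,
    max_sub_zero_div_mul_self hδ]

theorem half_sub_le_inner_softThreshold_self {δ : ℝ} (hδ : 0 ≤ δ) (x : E) :
    (‖softThreshold δ x‖ ^ 2 + ‖x‖ ^ 2 - δ ^ 2) / 2 ≤ ⟪softThreshold δ x, x⟫ := by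
  rw [inner_softThreshold_self hδ, norm_softThreshold hδ]
  rcases le_total ‖x‖ δ with hx | hx
  · rw [max_eq_right (by linarith)]
    nlinarith [norm_nonneg x]
  · rw [max_eq_left (by linarith)]
    nlinarith

/-- Both `softThreshold δ x` and `x - softThreshold δ x` are nonnegative multiples of `x` whose
norms, `(‖x‖ - δ)⁺` and `min ‖x‖ δ`, increase with `‖x‖`. -/
theorem norm_sub_softThreshold_sq_le_inner {δ : ℝ} (hδ : 0 ≤ δ) (x y : E) :
    ‖softThreshold δ x - softThreshold δ y‖ ^ 2 ≤
      ⟪softThreshold δ x - softThreshold δ y, x - y⟫ := by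
  have hrest (z : E) : z - softThreshold δ z = (1 - max (‖z‖ - δ) 0 / ‖z‖) • z := by
    rw [softThreshold, sub_smul, one_smul]
  have hrest_norm (z : E) : (1 - max (‖z‖ - δ) 0 / ‖z‖) * ‖z‖ = ‖z‖ - max (‖z‖ - δ) 0 := by
    rw [sub_mul, one_mul, max_sub_zero_div_mul_self hδ]
  have hcross : 0 ≤ ⟪softThreshold δ x - softThreshold δ y,
      (x - softThreshold δ x) - (y - softThreshold δ y)⟫ := by
    rw [hrest, hrest, softThreshold, softThreshold]
    refine inner_smul_sub_smul_nonneg (by positivity) (by positivity) ?_ ?_ ?_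
    · exact sub_nonneg.2 (max_sub_zero_div_le_one hδ (norm_nonneg x))
    · exact sub_nonneg.2 (max_sub_zero_div_le_one hδ (norm_nonneg y))
    · rw [max_sub_zero_div_mul_self hδ, max_sub_zero_div_mul_self hδ, hrest_norm, hrest_norm]
      exact ((monotone_max_sub_zero δ).monovary (monotone_sub_max_sub_zero δ)).sub_mul_sub_nonneg
        ‖y‖ ‖x‖
  have hsplit : x - y = (softThreshold δ x - softThreshold δ y) +
      ((x - softThreshold δ x) - (y - softThreshold δ y)) := by abel
  rw [hsplit, inner_add_right, real_inner_self_eq_norm_sq]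
  linarith

theorem lipschitzWith_one_softThreshold {δ : ℝ} (hδ : 0 ≤ δ) :
    LipschitzWith 1 (softThreshold (E := E) δ) := by
  refine LipschitzWith.of_dist_le_mul fun x y => ?_
  rw [NNReal.coe_one, one_mul, dist_eq_norm, dist_eq_norm]
  have hfne := (norm_sub_softThreshold_sq_le_inner hδ x y).trans (real_inner_le_norm _ _)
  rcases (norm_nonneg (softThreshold δ x - softThreshold δ y)).eq_or_lt with h | h
  · rw [← h]; exact norm_nonneg _
  · rw [sq] at hfne; exact le_of_mul_le_mul_left hfne h

end SoftThreshold

theorem activatedEulerMap_eq_smul_softThreshold {d : ℕ} (ν δstar : ℝ) (D : Mat d) :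
    activatedEulerMap ν δstar D = (2 * ν) • softThreshold δstar D := by
  rw [activatedEulerMap, softThreshold, smul_smul]
  split_ifs with hD
  · simp [hD]
  · rfl

theorem activatedEulerMap_coercive {d : ℕ} {ν δstar : ℝ} (hν : 0 < ν) (hδ : 0 ≤ δstar)
    (D : Mat d) :
    min (1 / (4 * ν)) ν * (‖activatedEulerMap ν δstar D‖ ^ 2 + ‖D‖ ^ 2) - ν * δstar ^ 2 ≤
      frob (activatedEulerMap ν δstar D) D := by
  rw [frob, activatedEulerMap_eq_smul_softThreshold, real_inner_smul_left, norm_smul,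
    Real.norm_of_nonneg (by positivity)]
  have hS := half_sub_le_inner_softThreshold_self hδ D
  have hC₁S : min (1 / (4 * ν)) ν * (2 * ν) ^ 2 ≤ ν :=
    calc min (1 / (4 * ν)) ν * (2 * ν) ^ 2 ≤ 1 / (4 * ν) * (2 * ν) ^ 2 := by
          gcongr; exact min_le_left _ _
      _ = ν := by field_simp; ring
  have hC₁D : min (1 / (4 * ν)) ν ≤ ν := min_le_right _ _
  nlinarith [sq_nonneg ‖softThreshold δstar D‖, sq_nonneg ‖D‖]

theorem lipschitzWith_activatedEulerMap {d : ℕ} (ν : ℝ) {δstar : ℝ} (hδ : 0 ≤ δstar) :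
    LipschitzWith ‖2 * ν‖₊ (activatedEulerMap (d := d) ν δstar) := by
  have hf : activatedEulerMap (d := d) ν δstar = ((2 * ν) • ·) ∘ softThreshold δstar :=
    funext (activatedEulerMap_eq_smul_softThreshold ν δstar)
  simpa [hf] using
    (lipschitzWith_smul (2 * ν)).comp (lipschitzWith_one_softThreshold (E := Mat d) hδ)

theorem frob_activatedEulerMap_sub_nonneg {d : ℕ} {ν δstar : ℝ} (hν : 0 ≤ ν)
    (hδ : 0 ≤ δstar) (D₁ D₂ : Mat d) :
    0 ≤ frob (activatedEulerMap ν δstar D₁ - activatedEulerMap ν δstar D₂) (D₁ - D₂) := by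
  simp only [frob, activatedEulerMap_eq_smul_softThreshold, ← smul_sub, real_inner_smul_left]
  have := (sq_nonneg _).trans (norm_sub_softThreshold_sq_le_inner hδ D₁ D₂)
  positivity

theorem activatedEuler_properties_general {d : ℕ} (ν δstar : ℝ)
    (hν : 0 < ν) (hδ : 0 < δstar) :
    (∃ K : NNReal, LipschitzWith K (activatedEulerMap (d := d) ν δstar)) ∧
    (∀ D₁ D₂ : Mat d,
      0 ≤ frob (activatedEulerMap ν δstar D₁ - activatedEulerMap ν δstar D₂)
        (D₁ - D₂)) ∧
    (∃ C₁ C₂ : ℝ, 0 < C₁ ∧ 0 < C₂ ∧ ∀ D : Mat d,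
      C₁ * (‖activatedEulerMap ν δstar D‖ ^ 2 + ‖D‖ ^ 2) - C₂ ≤
        frob (activatedEulerMap ν δstar D) D) :=
  ⟨⟨_, lipschitzWith_activatedEulerMap ν hδ.le⟩, frob_activatedEulerMap_sub_nonneg hν.le hδ.le,
    ⟨_, _, by positivity, by positivity, activatedEulerMap_coercive hν hδ.le⟩⟩

/-- the activated Euler response map is Lipschitz continuous, monotone,
and satisfies the coercivity condition (G4) with exponent `r = 2`. -/
theorem activatedEuler_properties {d : ℕ} (hd : 1 ≤ d) (ν δstar : ℝ)
    (hν : 0 < ν) (hδ : 0 < δstar) :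
    (∃ K : NNReal, LipschitzWith K (activatedEulerMap (d := d) ν δstar)) ∧
    (∀ D₁ D₂ : Mat d,
      0 ≤ frob (activatedEulerMap ν δstar D₁ - activatedEulerMap ν δstar D₂)
        (D₁ - D₂)) ∧
    (∃ C₁ C₂ : ℝ, 0 < C₁ ∧ 0 < C₂ ∧ ∀ D : Mat d,
      C₁ * (‖activatedEulerMap ν δstar D‖ ^ 2 + ‖D‖ ^ 2) - C₂ ≤
        frob (activatedEulerMap ν δstar D) D) :=
  activatedEuler_properties_general ν δstar hν hδ
end
end
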